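/- arXiv:math/0501298 — 9 statements merged into one kernel-verified Lean document; each statement's English description precedes it below -/
import Mathlib

section
/- For all x > 0, the quantity (x+1)³·(4x^{3/2} + √2·(x²+1)^{3/2}) / (32√2·(x²+1)^{3/2}·x^{3/2}) is at least 1/2, with equality at x = 1. -/
private lemma rpow_3halves {x : ℝ} (hx : 0 ≤ x) :
    x ^ ((3 : ℝ) / 2) = (Real.sqrt x) ^ 3 := by
  rw [Real.sqrt_eq_rpow, ← Real.rpow_natCast (x ^ ((1:ℝ)/2)) 3, ← Real.rpow_mul hx]
  norm_num

private lemma le_of_sq_le_sq' {a b : ℝ} (ha : 0 ≤ a) (hb : 0 ≤ b) (h : a ^ 2 ≤ b ^ 2) :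
    a ≤ b := by
  nlinarith [sq_nonneg (a - b), sq_nonneg (a + b)]

theorem ratio_SG_Delta :
    (∀ x : ℝ, 0 < x →
      (1 : ℝ) / 2 ≤
        (x + 1) ^ 3 * (4 * x ^ ((3 : ℝ) / 2) + Real.sqrt 2 * (x ^ 2 + 1) ^ ((3 : ℝ) / 2)) /
          (32 * Real.sqrt 2 * (x ^ 2 + 1) ^ ((3 : ℝ) / 2) * x ^ ((3 : ℝ) / 2))) ∧
    ((1 : ℝ) + 1) ^ 3 * (4 * (1 : ℝ) ^ ((3 : ℝ) / 2) + Real.sqrt 2 * ((1 : ℝ) ^ 2 + 1) ^ ((3 : ℝ) / 2)) /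
      (32 * Real.sqrt 2 * ((1 : ℝ) ^ 2 + 1) ^ ((3 : ℝ) / 2) * (1 : ℝ) ^ ((3 : ℝ) / 2)) = 1 / 2 := by
  have hr2 : Real.sqrt 2 ^ 2 = 2 := Real.sq_sqrt (by norm_num)
  have hrpos : (0:ℝ) < Real.sqrt 2 := Real.sqrt_pos.mpr (by norm_num)
  constructor
  · intro x hx
    have hx2 : (0:ℝ) < x ^ 2 + 1 := by positivity
    rw [rpow_3halves hx.le, rpow_3halves hx2.le]
    set r := Real.sqrt 2 with hrdef
    set s := Real.sqrt (x ^ 2 + 1) with hsdef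
    set t := Real.sqrt x with htdef
    have hs : s ^ 2 = x ^ 2 + 1 := Real.sq_sqrt hx2.le
    have hspos : 0 < s := Real.sqrt_pos.mpr hx2
    have ht : t ^ 2 = x := Real.sq_sqrt hx.le
    have htpos : 0 < t := Real.sqrt_pos.mpr hx
    rw [le_div_iff₀ (by positivity)]
    have h1 : 8 * x * (x ^ 2 + 1) ≤ (x + 1) ^ 4 := by nlinarith [sq_nonneg ((x - 1) ^ 2)]
    -- step 2 : 16 r s^3 t^3 ≤ (x+1)^6
    have h2 : 16 * r * s ^ 3 * t ^ 3 ≤ (x + 1) ^ 6 := by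
      apply le_of_sq_le_sq' (by positivity) (by positivity)
      have ha2 : (16 * r * s ^ 3 * t ^ 3) ^ 2 = (8 * x * (x ^ 2 + 1)) ^ 3 := by
        have : (16 * r * s ^ 3 * t ^ 3) ^ 2 = 256 * r ^ 2 * (s ^ 2) ^ 3 * (t ^ 2) ^ 3 := by ring
        rw [this, hr2, hs, ht]; ring
      have hb : (8 * x * (x ^ 2 + 1)) ^ 3 ≤ ((x + 1) ^ 4) ^ 3 :=
        pow_le_pow_left₀ (by positivity) h1 3
      calc (16 * r * s ^ 3 * t ^ 3) ^ 2 = (8 * x * (x ^ 2 + 1)) ^ 3 := ha2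
        _ ≤ ((x + 1) ^ 4) ^ 3 := hb
        _ = ((x + 1) ^ 6) ^ 2 := by ring
    -- step 3 : conclude
    have h3 : 16 * r * s ^ 3 * t ^ 3 ≤ (x + 1) ^ 3 * (4 * t ^ 3 + r * s ^ 3) := by
      apply le_of_sq_le_sq' (by positivity) (by positivity)
      have hone : 16 * r * s ^ 3 * t ^ 3 ≤ (4 * t ^ 3 + r * s ^ 3) ^ 2 := by
        nlinarith [sq_nonneg (4 * t ^ 3 - r * s ^ 3)]
      calc (16 * r * s ^ 3 * t ^ 3) ^ 2
          = (16 * r * s ^ 3 * t ^ 3) * (16 * r * s ^ 3 * t ^ 3) := by ring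
        _ ≤ ((x + 1) ^ 6) * ((4 * t ^ 3 + r * s ^ 3) ^ 2) := by
            apply mul_le_mul h2 hone (by positivity) (by positivity)
        _ = ((x + 1) ^ 3 * (4 * t ^ 3 + r * s ^ 3)) ^ 2 := by ring
    nlinarith [h3]
  · rw [Real.one_rpow, rpow_3halves (x := (1:ℝ)^2 + 1) (by norm_num)]
    have hsq : Real.sqrt ((1:ℝ)^2 + 1) = Real.sqrt 2 := by norm_num
    rw [hsq]
    have h3 : Real.sqrt 2 ^ 3 = 2 * Real.sqrt 2 := by
      rw [pow_succ, hr2]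
    rw [h3]
    rw [div_eq_iff (by positivity)]
    nlinarith [hr2]
end

section
/- Let P = (p₁,…,pₙ) and Q = (q₁,…,qₙ) be probability distributions with all pᵢ, qᵢ > 0. Then M_SA(P‖Q) := Σᵢ √((pᵢ²+qᵢ²)/2) − 1 satisfies M_SA(P‖Q) ≤ (1/3)·M_SH(P‖Q), where M_SH(P‖Q) := Σᵢ (√((pᵢ²+qᵢ²)/2) − 2pᵢqᵢ/(pᵢ+qᵢ)). -/
lemma pointwise_MSA (a b : ℝ) (ha : 0 < a) (hb : 0 < b) :
    Real.sqrt ((a ^ 2 + b ^ 2) / 2) - (a + b) / 2 ≤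
      (1 / 3) * (Real.sqrt ((a ^ 2 + b ^ 2) / 2) - 2 * a * b / (a + b)) := by
  have hab : 0 < a + b := by linarith
  have hS : Real.sqrt ((a ^ 2 + b ^ 2) / 2) ≤ (3 * a ^ 2 + 2 * a * b + 3 * b ^ 2) / (4 * (a + b)) := by
    have h1 : (a ^ 2 + b ^ 2) / 2 ≤ ((3 * a ^ 2 + 2 * a * b + 3 * b ^ 2) / (4 * (a + b))) ^ 2 := by
      rw [div_pow, le_div_iff₀ (by positivity)]
      nlinarith [sq_nonneg (a ^ 2 + b ^ 2 - 2 * a * b), sq_nonneg (a - b), mul_pos ha hb]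
    calc Real.sqrt ((a ^ 2 + b ^ 2) / 2)
        ≤ Real.sqrt (((3 * a ^ 2 + 2 * a * b + 3 * b ^ 2) / (4 * (a + b))) ^ 2) :=
          Real.sqrt_le_sqrt h1
      _ = (3 * a ^ 2 + 2 * a * b + 3 * b ^ 2) / (4 * (a + b)) :=
          Real.sqrt_sq (by positivity)
  have hH : 2 * a * b / (a + b) = 2 * a * b / (a + b) := rfl
  have key : (2 / 3) * Real.sqrt ((a ^ 2 + b ^ 2) / 2) ≤
      (a + b) / 2 - (1 / 3) * (2 * a * b / (a + b)) := by
    have h2 : (a + b) / 2 - (1 / 3) * (2 * a * b / (a + b)) =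
        (2 / 3) * ((3 * a ^ 2 + 2 * a * b + 3 * b ^ 2) / (4 * (a + b))) := by
      field_simp
      ring
    rw [h2]
    linarith
  linarith

theorem MSA_le_third_MSH (n : ℕ) (p q : Fin n → ℝ)
    (hp : ∀ i, 0 < p i) (hq : ∀ i, 0 < q i)
    (hp1 : ∑ i, p i = 1) (hq1 : ∑ i, q i = 1) :
    (∑ i, Real.sqrt ((p i ^ 2 + q i ^ 2) / 2)) - 1 ≤
      (1 / 3) * ∑ i, (Real.sqrt ((p i ^ 2 + q i ^ 2) / 2) - 2 * p i * q i / (p i + q i)) := by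
  have h1 : (∑ i, Real.sqrt ((p i ^ 2 + q i ^ 2) / 2)) - 1 =
      ∑ i, (Real.sqrt ((p i ^ 2 + q i ^ 2) / 2) - (p i + q i) / 2) := by
    rw [Finset.sum_sub_distrib]
    have : ∑ i, (p i + q i) / 2 = 1 := by
      rw [← Finset.sum_div, Finset.sum_add_distrib, hp1, hq1]
      norm_num
    rw [this]
  rw [h1, Finset.mul_sum]
  exact Finset.sum_le_sum fun i _ => pointwise_MSA (p i) (q i) (hp i) (hq i)
end

section
/- Let P and Q be probability distributions with strictly positive entries. Then M_SA(P‖Q) := Σᵢ √((pᵢ²+qᵢ²)/2) − 1 satisfies M_SA(P‖Q) ≤ (1/4)·Δ(P‖Q), where Δ(P‖Q) := Σᵢ (pᵢ−qᵢ)²/(pᵢ+qᵢ). -/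
theorem MSA_le_quarter_Delta (n : ℕ) (p q : Fin n → ℝ)
    (hp : ∀ i, 0 < p i) (hq : ∀ i, 0 < q i)
    (hp1 : ∑ i, p i = 1) (hq1 : ∑ i, q i = 1) :
    (∑ i, Real.sqrt ((p i ^ 2 + q i ^ 2) / 2)) - 1 ≤
      (1 / 4) * ∑ i, (p i - q i) ^ 2 / (p i + q i) := by
  have key : ∀ i, Real.sqrt ((p i ^ 2 + q i ^ 2) / 2) ≤
      (p i + q i) / 2 + (1 / 4) * ((p i - q i) ^ 2 / (p i + q i)) := by
    intro i
    have hs : 0 < p i + q i := by have := hp i; have := hq i; linarith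
    rw [show (2:ℝ) = 2 by rfl]
    apply Real.sqrt_le_iff.mpr
    constructor
    · positivity
    · have h1 : 0 ≤ (p i - q i) ^ 2 / (p i + q i) := by positivity
      nlinarith [sq_nonneg ((p i - q i)^2 / (p i + q i)), sq_nonneg (p i - q i),
        mul_pos hs hs, div_mul_cancel₀ ((p i - q i)^2) (ne_of_gt hs)]
  have hsum : ∑ i, Real.sqrt ((p i ^ 2 + q i ^ 2) / 2) ≤
      ∑ i, ((p i + q i) / 2 + (1 / 4) * ((p i - q i) ^ 2 / (p i + q i))) :=
    Finset.sum_le_sum fun i _ => key i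
  rw [Finset.sum_add_distrib] at hsum
  have h2 : ∑ i, (p i + q i) / 2 = 1 := by
    rw [← Finset.sum_div, Finset.sum_add_distrib, hp1, hq1]; norm_num
  rw [← Finset.mul_sum] at hsum
  linarith
end

section
/- Let P and Q be probability distributions with strictly positive entries. Then (1/2)·Δ(P‖Q) ≤ M_SG(P‖Q), where Δ(P‖Q) := Σᵢ (pᵢ−qᵢ)²/(pᵢ+qᵢ) and M_SG(P‖Q) := Σᵢ (√((pᵢ²+qᵢ²)/2) − √(pᵢqᵢ)). -/
theorem half_Delta_le_MSG (n : ℕ) (p q : Fin n → ℝ)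
    (hp : ∀ i, 0 < p i) (hq : ∀ i, 0 < q i)
    (hp1 : ∑ i, p i = 1) (hq1 : ∑ i, q i = 1) :
    (1 / 2) * ∑ i, (p i - q i) ^ 2 / (p i + q i) ≤
      ∑ i, (Real.sqrt ((p i ^ 2 + q i ^ 2) / 2) - Real.sqrt (p i * q i)) := by
  rw [Finset.mul_sum]
  apply Finset.sum_le_sum
  intro i _
  have hpi := hp i
  have hqi := hq i
  set a := Real.sqrt ((p i ^ 2 + q i ^ 2) / 2) with hadef
  set b := Real.sqrt (p i * q i) with hbdef
  have ha : 0 ≤ a := Real.sqrt_nonneg _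
  have hb : 0 ≤ b := Real.sqrt_nonneg _
  have ha2 : a ^ 2 = (p i ^ 2 + q i ^ 2) / 2 := by
    rw [hadef, Real.sq_sqrt]; positivity
  have hb2 : b ^ 2 = p i * q i := by
    rw [hbdef, Real.sq_sqrt]; positivity
  have hba : b ≤ a := by
    rw [hadef, hbdef]
    apply Real.sqrt_le_sqrt
    nlinarith [sq_nonneg (p i - q i)]
  have hpq : 0 < p i + q i := by linarith
  have hab : a + b ≤ p i + q i := by
    nlinarith [sq_nonneg (a - b), sq_nonneg (a + b - (p i + q i))]
  have key : (p i - q i) ^ 2 / (p i + q i) ≤ 2 * (a - b) := by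
    rw [div_le_iff₀ hpq]
    nlinarith [mul_le_mul_of_nonneg_left hab (by linarith : (0:ℝ) ≤ a - b)]
  linarith
end

section
/- Let P and Q be probability distributions with strictly positive entries. Then M_SG(P‖Q) ≤ 2·h(P‖Q), where M_SG(P‖Q) := Σᵢ (√((pᵢ²+qᵢ²)/2) − √(pᵢqᵢ)) and h(P‖Q) := (1/2)·Σᵢ (√pᵢ − √qᵢ)² is the Hellinger discrimination. -/
theorem MSG_le_two_h (n : ℕ) (p q : Fin n → ℝ)
    (hp : ∀ i, 0 < p i) (hq : ∀ i, 0 < q i)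
    (hp1 : ∑ i, p i = 1) (hq1 : ∑ i, q i = 1) :
    (∑ i, (Real.sqrt ((p i ^ 2 + q i ^ 2) / 2) - Real.sqrt (p i * q i))) ≤
      2 * ((1 / 2) * ∑ i, (Real.sqrt (p i) - Real.sqrt (q i)) ^ 2) := by
  have key : ∀ i ∈ Finset.univ, Real.sqrt ((p i ^ 2 + q i ^ 2) / 2) - Real.sqrt (p i * q i)
      ≤ (Real.sqrt (p i) - Real.sqrt (q i)) ^ 2 := by
    intro i _
    set a := Real.sqrt (p i) with ha
    set b := Real.sqrt (q i) with hb
    have ha0 : 0 ≤ a := Real.sqrt_nonneg _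
    have hb0 : 0 ≤ b := Real.sqrt_nonneg _
    have hpa : p i = a ^ 2 := (Real.sq_sqrt (hp i).le).symm
    have hqb : q i = b ^ 2 := (Real.sq_sqrt (hq i).le).symm
    have hab : Real.sqrt (p i * q i) = a * b := by
      rw [Real.sqrt_mul (hp i).le]
    have h1 : Real.sqrt ((p i ^ 2 + q i ^ 2) / 2) ≤ a ^ 2 - a * b + b ^ 2 := by
      rw [show a ^ 2 - a * b + b ^ 2 = Real.sqrt ((a ^ 2 - a * b + b ^ 2) ^ 2) from
        (Real.sqrt_sq (by nlinarith [sq_nonneg (a - b)])).symm]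
      apply Real.sqrt_le_sqrt
      rw [hpa, hqb]
      nlinarith [sq_nonneg (a - b), sq_nonneg ((a - b) ^ 2), sq_nonneg (a * b)]
    rw [hab]
    nlinarith
  calc (∑ i, (Real.sqrt ((p i ^ 2 + q i ^ 2) / 2) - Real.sqrt (p i * q i)))
      ≤ ∑ i, (Real.sqrt (p i) - Real.sqrt (q i)) ^ 2 := Finset.sum_le_sum key
    _ = 2 * ((1 / 2) * ∑ i, (Real.sqrt (p i) - Real.sqrt (q i)) ^ 2) := by ring
end

section
/- Let P and Q be probability distributions with strictly positive entries. Then M_SA(P‖Q) ≤ (1/3)·M_SH(P‖Q) ≤ (1/4)·Δ(P‖Q) ≤ (1/2)·M_SG(P‖Q) ≤ h(P‖Q), where M_SA(P‖Q) = Σᵢ √((pᵢ²+qᵢ²)/2) − 1, M_SH(P‖Q) = Σᵢ (√((pᵢ²+qᵢ²)/2) − 2pᵢqᵢ/(pᵢ+qᵢ)), Δ(P‖Q) = Σᵢ (pᵢ−qᵢ)²/(pᵢ+qᵢ), M_SG(P‖Q) = Σᵢ (√((pᵢ²+qᵢ²)/2) − √(pᵢqᵢ)), and h(P‖Q) = (1/2)Σᵢ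 (√pᵢ−√qᵢ)². -/
/-!
Every inequality of the chain already holds term by term. Write `S, A, G, H` for the quadratic,
arithmetic, geometric and harmonic means of `pᵢ, qᵢ`. Since `∑ A = 1`, the `i`-th terms of
`M_SA, M_SH/3, Δ/4, M_SG/2, h` are `S - A, (S - H)/3, (A - H)/2, (S - G)/2, A - G`, and the four
comparisons between them amount to the three mean inequalities `2S + H ≤ 3A`, `A + G ≤ S + H`
and `S + G ≤ 2A`, each of which becomes polynomial after squaring away the root.
-/

open Finset

noncomputable def quadMean (x y : ℝ) : ℝ := √((x ^ 2 + y ^ 2) / 2)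

noncomputable def arithMean (x y : ℝ) : ℝ := (x + y) / 2

noncomputable def geomMean (x y : ℝ) : ℝ := √(x * y)

noncomputable def harmMean (x y : ℝ) : ℝ := 2 * x * y / (x + y)

section MeanInequalities

variable {x y : ℝ}

theorem two_mul_quadMean_add_harmMean_le (hx : 0 < x) (hy : 0 < y) :
    2 * quadMean x y + harmMean x y ≤ 3 * arithMean x y := by
  have hs : 0 < x + y := by linarith
  have hbound : quadMean x y ≤ (3 * (x + y) ^ 2 - 4 * (x * y)) / (4 * (x + y)) := by
    rw [quadMean, Real.sqrt_le_iff]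
    constructor
    · exact div_nonneg (by nlinarith [sq_nonneg (x - y)]) (by positivity)
    · rw [div_pow, le_div_iff₀ (by positivity)]
      -- after clearing denominators the two sides differ by `(x - y) ^ 4`
      nlinarith [sq_nonneg ((x - y) ^ 2)]
  have hharm : harmMean x y =
      3 * arithMean x y - 2 * ((3 * (x + y) ^ 2 - 4 * (x * y)) / (4 * (x + y))) := by
    rw [harmMean, arithMean]; field_simp; ring
  linarith

theorem sq_sub_div_add_eq (hxy : x + y ≠ 0) :
    (x - y) ^ 2 / (x + y) = 2 * (arithMean x y - harmMean x y) := by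
  rw [arithMean, harmMean]; field_simp; ring

theorem arithMean_add_geomMean_le (hx : 0 < x) (hy : 0 < y) :
    arithMean x y + geomMean x y ≤ quadMean x y + harmMean x y := by
  have hs : 0 < x + y := by linarith
  have hg : 0 ≤ geomMean x y := Real.sqrt_nonneg _
  have hg2 : geomMean x y ^ 2 = x * y := Real.sq_sqrt (by positivity)
  have hd : 0 ≤ arithMean x y - harmMean x y := by
    have := sq_sub_div_add_eq hs.ne'
    have : 0 ≤ (x - y) ^ 2 / (x + y) := by positivity
    linarith
  have hdmul : (arithMean x y - harmMean x y) * (2 * (x + y)) = (x - y) ^ 2 := by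
    rw [arithMean, harmMean]; field_simp; ring
  set g := geomMean x y
  set d := arithMean x y - harmMean x y
  have hbound : g + d ≤ quadMean x y := by
    rw [quadMean, Real.le_sqrt (by positivity) (by positivity)]
    nlinarith [mul_nonneg hd (sq_nonneg (x + y - 2 * g)), sq_nonneg (x + y - 2 * g),
      mul_nonneg hd hd, mul_nonneg hd hg]
  linarith

theorem quadMean_add_geomMean_le (hx : 0 ≤ x) (hy : 0 ≤ y) :
    quadMean x y + geomMean x y ≤ 2 * arithMean x y := by
  have hg2 : geomMean x y ^ 2 = x * y := Real.sq_sqrt (mul_nonneg hx hy)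
  have hgA : geomMean x y ≤ (x + y) / 2 := by
    rw [geomMean]; exact Real.sqrt_le_iff.mpr ⟨by linarith, by nlinarith [sq_nonneg (x - y)]⟩
  have hbound : quadMean x y ≤ x + y - geomMean x y := by
    rw [quadMean, Real.sqrt_le_iff]
    exact ⟨by linarith, by nlinarith [sq_nonneg (x + y - 2 * geomMean x y)]⟩
  rw [arithMean]
  linarith

theorem sq_sqrt_sub_sqrt_eq (hx : 0 ≤ x) (hy : 0 ≤ y) :
    (√x - √y) ^ 2 = 2 * (arithMean x y - geomMean x y) := by
  rw [arithMean, geomMean, sub_sq, Real.sq_sqrt hx, Real.sq_sqrt hy, Real.sqrt_mul hx]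
  ring

end MeanInequalities

theorem mean_divergence_chain (n : ℕ) (p q : Fin n → ℝ)
    (hp : ∀ i, 0 < p i) (hq : ∀ i, 0 < q i)
    (hp1 : ∑ i, p i = 1) (hq1 : ∑ i, q i = 1) :
    (∑ i, Real.sqrt ((p i ^ 2 + q i ^ 2) / 2)) - 1 ≤
      (1 / 3) * ∑ i, (Real.sqrt ((p i ^ 2 + q i ^ 2) / 2) - 2 * p i * q i / (p i + q i)) ∧
    (1 / 3) * (∑ i, (Real.sqrt ((p i ^ 2 + q i ^ 2) / 2) - 2 * p i * q i / (p i + q i))) ≤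
      (1 / 4) * ∑ i, (p i - q i) ^ 2 / (p i + q i) ∧
    (1 / 4) * (∑ i, (p i - q i) ^ 2 / (p i + q i)) ≤
      (1 / 2) * ∑ i, (Real.sqrt ((p i ^ 2 + q i ^ 2) / 2) - Real.sqrt (p i * q i)) ∧
    (1 / 2) * (∑ i, (Real.sqrt ((p i ^ 2 + q i ^ 2) / 2) - Real.sqrt (p i * q i))) ≤
      (1 / 2) * ∑ i, (Real.sqrt (p i) - Real.sqrt (q i)) ^ 2 := by
  have hA : ∑ i, arithMean (p i) (q i) = 1 := by
    simp only [arithMean]; rw [← sum_div, sum_add_distrib, hp1, hq1]; norm_num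
  have hΔ i := sq_sub_div_add_eq (x := p i) (y := q i) (add_pos (hp i) (hq i)).ne'
  have hh i := sq_sqrt_sub_sqrt_eq (hp i).le (hq i).le
  have hAH i := two_mul_quadMean_add_harmMean_le (hp i) (hq i)
  have hAG i := arithMean_add_geomMean_le (hp i) (hq i)
  have hSG i := quadMean_add_geomMean_le (hp i).le (hq i).le
  simp only [← quadMean.eq_1, ← geomMean.eq_1, ← harmMean.eq_1, hΔ, hh, mul_sum]
  refine ⟨?_, ?_, ?_, ?_⟩
  · calc ∑ i, quadMean (p i) (q i) - 1
        = ∑ i, (quadMean (p i) (q i) - arithMean (p i) (q i)) := by rw [sum_sub_distrib, hA]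
      _ ≤ _ := sum_le_sum fun i _ => by linarith [hAH i]
  all_goals exact sum_le_sum fun i _ => by linarith [hAH i, hAG i, hSG i]
end

section
/- For all x > 0, with A = (x+1)/2, G = √x, H = 2x/(x+1), S = √((x²+1)/2), one has S + H ≥ A + G. -/
theorem S_add_H_ge_A_add_G (x : ℝ) (hx : 0 < x) :
    (x + 1) / 2 + Real.sqrt x ≤ Real.sqrt ((x ^ 2 + 1) / 2) + 2 * x / (x + 1) := by
  obtain ⟨t, ht0, ht2⟩ : ∃ t : ℝ, 0 < t ∧ t ^ 2 = x :=
    ⟨Real.sqrt x, Real.sqrt_pos.mpr hx, Real.sq_sqrt hx.le⟩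
  subst ht2
  rw [Real.sqrt_sq ht0.le]
  set s := Real.sqrt (((t ^ 2) ^ 2 + 1) / 2) with hs
  have hs2 : s ^ 2 = ((t ^ 2) ^ 2 + 1) / 2 := Real.sq_sqrt (by positivity)
  have hsA : (t ^ 2 + 1) / 2 ≤ s := by
    rw [hs, show (t ^ 2 + 1) / 2 = Real.sqrt (((t ^ 2 + 1) / 2) ^ 2) from
      (Real.sqrt_sq (by positivity)).symm]
    apply Real.sqrt_le_sqrt
    nlinarith [sq_nonneg (t ^ 2 - 1)]
  have hsum : 0 < s + (t ^ 2 + 1) / 2 := by positivity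
  have hc : (s - (t ^ 2 + 1) / 2) * (s + (t ^ 2 + 1) / 2) = (t ^ 2 - 1) ^ 2 / 4 := by
    linear_combination hs2
  have hupper : s - (t ^ 2 + 1) / 2 ≤ (t ^ 2 - 1) ^ 2 / (4 * (t ^ 2 + 1)) := by
    rw [le_div_iff₀ (by positivity)]
    nlinarith [hc, sq_nonneg (s - (t ^ 2 + 1) / 2)]
  have hg : 0 ≤ t * (t - 1) ^ 2 := by positivity
  have h1 : t * (t - 1) ^ 2 * (s + (t ^ 2 + 1) / 2) ≤
      t * (t - 1) ^ 2 * ((t ^ 2 + 1) + (t ^ 2 - 1) ^ 2 / (4 * (t ^ 2 + 1))) :=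
    mul_le_mul_of_nonneg_left (by linarith) hg
  have h2 : t * (t - 1) ^ 2 * ((t ^ 2 + 1) + (t ^ 2 - 1) ^ 2 / (4 * (t ^ 2 + 1))) ≤
      (t ^ 2 - 1) ^ 2 * (t ^ 2 + 1) / 4 := by
    rw [add_div' _ _ _ (by positivity : (4 : ℝ) * (t ^ 2 + 1) ≠ 0), ← mul_div_assoc,
      div_le_div_iff₀ (by positivity) (by norm_num : (0:ℝ) < 4)]
    nlinarith [mul_nonneg (sq_nonneg ((t - 1) ^ 3)) (by positivity : (0:ℝ) ≤ t ^ 2 + t + 1)]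
  have key : t * (t - 1) ^ 2 ≤ (s - (t ^ 2 + 1) / 2) * (t ^ 2 + 1) := by
    have hmul : t * (t - 1) ^ 2 * (s + (t ^ 2 + 1) / 2) ≤
        (s - (t ^ 2 + 1) / 2) * (t ^ 2 + 1) * (s + (t ^ 2 + 1) / 2) := by
      nlinarith [h1, h2, hc]
    exact le_of_mul_le_mul_right hmul hsum
  have hx1 : (0 : ℝ) < t ^ 2 + 1 := by positivity
  have hcancel : 2 * t ^ 2 / (t ^ 2 + 1) * (t ^ 2 + 1) = 2 * t ^ 2 :=
    div_mul_cancel₀ _ (ne_of_gt hx1)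
  have hmul2 : ((t ^ 2 + 1) / 2 + t) * (t ^ 2 + 1) ≤
      (s + 2 * t ^ 2 / (t ^ 2 + 1)) * (t ^ 2 + 1) := by
    rw [add_mul, add_mul, hcancel]
    nlinarith [key]
  exact le_of_mul_le_mul_right hmul2 hx1
end

section
/- For all x > 0, with A = (x+1)/2, G = √x, H = 2x/(x+1), S = √((x²+1)/2), the following chain holds: (1/6)(3A − (2S+H)) ≤ (1/3)(A − (G+S)/2) ≤ (1/12)(3A + H − (S + 3G)) ≤ (1/3)((A+H)/2 − G) ≤ (1/6)(S + 2H − 3G). -/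
/-!
With `A = (x+1)/2`, `G = √x`, `H = 2x/(x+1)` and `S = √((x²+1)/2)`, each of the four
differences in the chain is a positive multiple of `S + H - (A + G)`, so everything reduces to
`A + G ≤ S + H`. Since `G² + S² = 2A²`, AM-GM gives `G S ≤ A²`, and one computes
`S + H - (A + G) = (G - 1)² (A² - G S) / (2A (S + A))`.
-/

open Real

lemma sqrt_mul_sqrt_sq_add_one_div_two_le {x : ℝ} (hx : 0 ≤ x) :
    √x * √((x ^ 2 + 1) / 2) ≤ ((x + 1) / 2) ^ 2 := by
  have hG : √x ^ 2 = x := sq_sqrt hx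
  have hS : √((x ^ 2 + 1) / 2) ^ 2 = (x ^ 2 + 1) / 2 := sq_sqrt (by positivity)
  nlinarith [two_mul_le_add_sq (√x) (√((x ^ 2 + 1) / 2))]

lemma add_sqrt_le_sqrt_add_harmonic {x : ℝ} (hx : 0 ≤ x) :
    (x + 1) / 2 + √x ≤ √((x ^ 2 + 1) / 2) + 2 * x / (x + 1) := by
  set G := √x
  set S := √((x ^ 2 + 1) / 2)
  have hx1 : 0 < x + 1 := by linarith
  have hG : G ^ 2 = x := sq_sqrt hx
  have hS : S ^ 2 = (x ^ 2 + 1) / 2 := sq_sqrt (by positivity)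
  have hGS : G * S ≤ ((x + 1) / 2) ^ 2 := sqrt_mul_sqrt_sq_add_one_div_two_le hx
  have hdiv : S + 2 * x / (x + 1) - ((x + 1) / 2 + G) =
      (S * (x + 1) + 2 * x - ((x + 1) / 2 + G) * (x + 1)) / (x + 1) := by
    field_simp
  have hid : (S * (x + 1) + 2 * x - ((x + 1) / 2 + G) * (x + 1)) * (S + (x + 1) / 2) =
      (G - 1) ^ 2 * (((x + 1) / 2) ^ 2 - G * S) := by
    linear_combination (x + 1) * hS - (((x + 1) / 2) ^ 2 - G * S + 2 * S) * hG
  have hpos : 0 < S + (x + 1) / 2 := by positivity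
  rw [← sub_nonneg, hdiv]
  refine div_nonneg (nonneg_of_mul_nonneg_left ?_ hpos) hx1.le
  rw [hid]
  exact mul_nonneg (sq_nonneg _) (sub_nonneg.2 hGS)

theorem refined_chain (x : ℝ) (hx : 0 < x) :
    (1 / 6) * (3 * ((x + 1) / 2) - (2 * Real.sqrt ((x ^ 2 + 1) / 2) + 2 * x / (x + 1))) ≤
      (1 / 3) * ((x + 1) / 2 - (Real.sqrt x + Real.sqrt ((x ^ 2 + 1) / 2)) / 2) ∧
    (1 / 3) * ((x + 1) / 2 - (Real.sqrt x + Real.sqrt ((x ^ 2 + 1) / 2)) / 2) ≤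
      (1 / 12) * (3 * ((x + 1) / 2) + 2 * x / (x + 1) -
        (Real.sqrt ((x ^ 2 + 1) / 2) + 3 * Real.sqrt x)) ∧
    (1 / 12) * (3 * ((x + 1) / 2) + 2 * x / (x + 1) -
        (Real.sqrt ((x ^ 2 + 1) / 2) + 3 * Real.sqrt x)) ≤
      (1 / 3) * (((x + 1) / 2 + 2 * x / (x + 1)) / 2 - Real.sqrt x) ∧
    (1 / 3) * (((x + 1) / 2 + 2 * x / (x + 1)) / 2 - Real.sqrt x) ≤
      (1 / 6) * (Real.sqrt ((x ^ 2 + 1) / 2) + 2 * (2 * x / (x + 1)) - 3 * Real.sqrt x) := by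
  have key := add_sqrt_le_sqrt_add_harmonic hx.le
  refine ⟨by linarith, by linarith, by linarith, by linarith⟩
end

section
/- For all x > 0, 3·((x+1)/2) ≥ 2·√((x²+1)/2) + 2x/(x+1); that is, 3A ≥ 2S + H where A, S, H are the arithmetic, square-root and harmonic means of x and 1. -/
theorem three_A_ge_two_S_add_H (x : ℝ) (hx : 0 < x) :
    2 * Real.sqrt ((x ^ 2 + 1) / 2) + 2 * x / (x + 1) ≤ 3 * ((x + 1) / 2) := by
  have hx1 : 0 < x + 1 := by linarith
  have hb : (0:ℝ) ≤ (3*x^2+2*x+3)/(4*(x+1)) := by positivity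
  have hsq : (x ^ 2 + 1) / 2 ≤ ((3*x^2+2*x+3)/(4*(x+1)))^2 := by
    rw [div_pow, le_div_iff₀ (by positivity)]
    nlinarith [sq_nonneg ((x-1)^2), sq_nonneg (x-1), sq_nonneg x]
  have h : Real.sqrt ((x ^ 2 + 1) / 2) ≤ (3*x^2+2*x+3)/(4*(x+1)) := by
    calc Real.sqrt ((x ^ 2 + 1) / 2) ≤ Real.sqrt (((3*x^2+2*x+3)/(4*(x+1)))^2) :=
          Real.sqrt_le_sqrt hsq
      _ = (3*x^2+2*x+3)/(4*(x+1)) := Real.sqrt_sq hb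
  set s := Real.sqrt ((x ^ 2 + 1) / 2) with hs
  have h4 : s * (4*(x+1)) ≤ 3*x^2+2*x+3 := (le_div_iff₀ (by positivity)).mp h
  rw [← sub_nonneg]
  have heq : 3*((x+1)/2) - (2*s + 2*x/(x+1)) = (3*x^2+2*x+3 - s*(4*(x+1)))/(2*(x+1)) := by
    field_simp; ring
  rw [heq]
  exact div_nonneg (by linarith) (by positivity)
end
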